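/- arXiv:1207.3231 — 2 statements merged into one kernel-verified Lean document; each statement's English description precedes it below -/
import Mathlib

section
/- Let P ∈ ℝ^{n×n} be a row-stochastic matrix whose diagonal entries are all positive, and suppose the directed graph with an edge from j to i whenever p_ij > 0 (i ≠ j) has a directed spanning tree. Then P is SIA: lim_{k→∞} P^k = 1·yᵀ for some vector y ∈ ℝ^n with y entrywise nonnegative and yᵀ1 = 1. Consequently, for every x₀ ∈ ℝ^n the iterates P^k x₀ converge to the consensus vector (yᵀx₀)·1. -/
open Matrix Finset Filter

/-!
Positive diagonal entries make positivity of `(P ^ m) i j` persist as `m` grows, so following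
the spanning tree from its root `r` yields a power `P ^ K` whose column `r` is bounded below by
some `δ > 0`. A stochastic matrix averages, so the maximum of `P ^ k *ᵥ x` decreases and its
minimum increases; applying `P ^ K` moreover shrinks their gap by the factor `1 - δ`. Hence both
converge to a common limit `c x`, which is linear in `x`, and `y j := c (Pi.single j 1)`.
-/

namespace Matrix

section Nonneg

variable {ι R : Type*} [Fintype ι] [Semiring R] [PartialOrder R] [IsStrictOrderedRing R]

lemma mul_apply_pos_of_pos {κ μ : Type*} {A : Matrix κ ι R} {B : Matrix ι μ R}
    (hA : ∀ i j, 0 ≤ A i j) (hB : ∀ i j, 0 ≤ B i j) {i : κ} {l : ι} {j : μ}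
    (hil : 0 < A i l) (hlj : 0 < B l j) : 0 < (A * B) i j :=
  sum_pos' (fun k _ => mul_nonneg (hA i k) (hB k j)) ⟨l, mem_univ l, mul_pos hil hlj⟩

variable [DecidableEq ι] {P : Matrix ι ι R}

lemma pow_apply_self_pos (hP : ∀ i j, 0 ≤ P i j) (hdiag : ∀ i, 0 < P i i) (k : ℕ) (i : ι) :
    0 < (P ^ k) i i := by
  induction k with
  | zero => simp
  | succ k ih =>
    rw [pow_succ']
    exact mul_apply_pos_of_pos hP (pow_apply_nonneg hP k) (hdiag i) ih

lemma eventually_pow_apply_pos_of_reflTransGen (hP : ∀ i j, 0 ≤ P i j)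
    (hdiag : ∀ i, 0 < P i i) {r i : ι} (h : Relation.ReflTransGen (fun x y => 0 < P y x) r i) :
    ∀ᶠ m in atTop, 0 < (P ^ m) i r := by
  induction h with
  | refl => exact .of_forall fun m => pow_apply_self_pos hP hdiag m r
  | tail _ hbc ih =>
    filter_upwards [(tendsto_sub_atTop_nat 1).eventually ih, eventually_ge_atTop 1] with m hm h1
    obtain ⟨m, rfl⟩ := Nat.exists_eq_add_of_le' h1
    rw [pow_succ']
    exact mul_apply_pos_of_pos hP (pow_apply_nonneg hP m) hbc (by simpa using hm)

lemma exists_pow_col_pos_of_reflTransGen (hP : ∀ i j, 0 ≤ P i j) (hdiag : ∀ i, 0 < P i i)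
    {r : ι} (hr : ∀ i, Relation.ReflTransGen (fun x y => 0 < P y x) r i) :
    ∃ K, ∀ i, 0 < (P ^ K) i r :=
  (eventually_all.2 fun i => eventually_pow_apply_pos_of_reflTransGen hP hdiag (hr i)).exists

end Nonneg

section Stochastic

variable {ι : Type*} [Fintype ι] [DecidableEq ι] {M : Matrix ι ι ℝ}

lemma mulVec_apply_le_of_le_col (hM : M ∈ rowStochastic ℝ ι) {r : ι} {δ : ℝ}
    (hδ : ∀ i, δ ≤ M i r) {x : ι → ℝ} {S : ℝ} (hx : ∀ j, x j ≤ S) (i : ι) :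
    (M *ᵥ x) i ≤ δ * x r + (1 - δ) * S := by
  -- `M i - Pi.single r δ` is a nonnegative weight vector of total mass `1 - δ`.
  have hw : 0 ≤ M i - Pi.single r δ := fun j => by
    rcases eq_or_ne j r with rfl | hj
    · simpa using hδ i
    · simpa [hj] using hM.1 i j
  have hrow : M i ⬝ᵥ 1 = 1 := congrFun hM.2 i
  calc (M *ᵥ x) i = (M i - Pi.single r δ) ⬝ᵥ x + δ * x r := by
        rw [sub_dotProduct, single_dotProduct]; exact (sub_add_cancel _ _).symm
    _ ≤ (M i - Pi.single r δ) ⬝ᵥ (S • 1) + δ * x r := by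
        gcongr
        exact dotProduct_le_dotProduct_of_nonneg_left (fun j => by simpa using hx j) hw
    _ = δ * x r + (1 - δ) * S := by
        simp only [dotProduct_smul, sub_dotProduct, hrow, single_dotProduct, Pi.one_apply,
          smul_eq_mul]
        ring

lemma le_mulVec_apply_of_le_col (hM : M ∈ rowStochastic ℝ ι) {r : ι} {δ : ℝ}
    (hδ : ∀ i, δ ≤ M i r) {x : ι → ℝ} {I : ℝ} (hx : ∀ j, I ≤ x j) (i : ι) :
    δ * x r + (1 - δ) * I ≤ (M *ᵥ x) i := by
  have := mulVec_apply_le_of_le_col hM hδ (x := -x) (S := -I) (fun j => neg_le_neg (hx j)) i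
  rw [mulVec_neg, Pi.neg_apply, Pi.neg_apply] at this
  linarith

variable [Nonempty ι]

lemma sup'_mulVec_le (hM : M ∈ rowStochastic ℝ ι) (x : ι → ℝ) :
    univ.sup' univ_nonempty (M *ᵥ x) ≤ univ.sup' univ_nonempty x :=
  sup'_le _ _ fun i _ => by
    simpa using mulVec_apply_le_of_le_col hM (r := i) (δ := 0) (fun k => hM.1 k i)
      (S := univ.sup' univ_nonempty x) (fun j => le_sup' x (mem_univ j)) i

lemma inf'_le_inf'_mulVec (hM : M ∈ rowStochastic ℝ ι) (x : ι → ℝ) :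
    univ.inf' univ_nonempty x ≤ univ.inf' univ_nonempty (M *ᵥ x) :=
  le_inf' _ _ fun i _ => by
    simpa using le_mulVec_apply_of_le_col hM (r := i) (δ := 0) (fun k => hM.1 k i)
      (I := univ.inf' univ_nonempty x) (fun j => inf'_le x (mem_univ j)) i

lemma sup'_sub_inf'_mulVec_le (hM : M ∈ rowStochastic ℝ ι) {r : ι} {δ : ℝ}
    (hδ : ∀ i, δ ≤ M i r) (x : ι → ℝ) :
    univ.sup' univ_nonempty (M *ᵥ x) - univ.inf' univ_nonempty (M *ᵥ x) ≤
      (1 - δ) * (univ.sup' univ_nonempty x - univ.inf' univ_nonempty x) := by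
  have hup : univ.sup' univ_nonempty (M *ᵥ x) ≤
      δ * x r + (1 - δ) * univ.sup' univ_nonempty x := sup'_le _ _ fun i _ =>
    mulVec_apply_le_of_le_col hM hδ (S := univ.sup' univ_nonempty x)
      (fun j => le_sup' x (mem_univ j)) i
  have hlo : δ * x r + (1 - δ) * univ.inf' univ_nonempty x ≤
      univ.inf' univ_nonempty (M *ᵥ x) := le_inf' _ _ fun i _ =>
    le_mulVec_apply_of_le_col hM hδ (I := univ.inf' univ_nonempty x)
      (fun j => inf'_le x (mem_univ j)) i
  linarith

end Stochastic

variable {ι : Type*} [Fintype ι] [DecidableEq ι] {P : Matrix ι ι ℝ}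

theorem exists_tendsto_pow_mulVec_const (hP : P ∈ rowStochastic ℝ ι) {K : ℕ} {r : ι}
    (hcol : ∀ i, 0 < (P ^ K) i r) (x : ι → ℝ) :
    ∃ c, Tendsto (fun k => P ^ k *ᵥ x) atTop (nhds fun _ => c) := by
  have : Nonempty ι := ⟨r⟩
  obtain ⟨i₀, hi₀⟩ := Finite.exists_min fun i => (P ^ K) i r
  set δ := (P ^ K) i₀ r
  set lo : ℕ → ℝ := fun k => univ.inf' univ_nonempty (P ^ k *ᵥ x)
  set hi : ℕ → ℝ := fun k => univ.sup' univ_nonempty (P ^ k *ᵥ x)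
  have hlo : Monotone lo := monotone_nat_of_le_succ fun k => by
    simpa only [lo, pow_succ', ← mulVec_mulVec] using inf'_le_inf'_mulVec hP (P ^ k *ᵥ x)
  have hhi : Antitone hi := antitone_nat_of_succ_le fun k => by
    simpa only [hi, pow_succ', ← mulVec_mulVec] using sup'_mulVec_le hP (P ^ k *ᵥ x)
  have hlohi : ∀ k, lo k ≤ hi k := fun k =>
    (inf'_le _ (mem_univ r)).trans (le_sup' (P ^ k *ᵥ x) (mem_univ r))
  have hshift : ∀ k, P ^ (k + K) *ᵥ x = P ^ K *ᵥ (P ^ k *ᵥ x) := fun k => by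
    rw [mulVec_mulVec, ← pow_add, add_comm]
  have hcontr : ∀ k, hi (k + K) - lo (k + K) ≤ (1 - δ) * (hi k - lo k) := fun k => by
    simpa only [hi, lo, hshift] using
      sup'_sub_inf'_mulVec_le (pow_mem hP K) hi₀ (P ^ k *ᵥ x)
  obtain ⟨a, ha⟩ : ∃ a, Tendsto lo atTop (nhds a) :=
    ⟨_, tendsto_atTop_ciSup hlo ⟨hi 0, by
      rintro _ ⟨k, rfl⟩; exact (hlohi k).trans (hhi k.zero_le)⟩⟩
  obtain ⟨b, hb⟩ : ∃ b, Tendsto hi atTop (nhds b) :=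
    ⟨_, tendsto_atTop_ciInf hhi ⟨lo 0, by
      rintro _ ⟨k, rfl⟩; exact (hlo k.zero_le).trans (hlohi k)⟩⟩
  have hab : a ≤ b := le_of_tendsto_of_tendsto' ha hb hlohi
  have hba : b - a ≤ (1 - δ) * (b - a) :=
    le_of_tendsto_of_tendsto' ((hb.sub ha).comp (tendsto_add_atTop_nat K))
      ((hb.sub ha).const_mul (1 - δ)) hcontr
  obtain rfl : b = a := by nlinarith [hcol i₀]
  exact ⟨b, tendsto_pi_nhds.2 fun i => tendsto_of_tendsto_of_tendsto_of_le_of_le ha hb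
    (fun k => inf'_le _ (mem_univ i)) (fun k => le_sup' (P ^ k *ᵥ x) (mem_univ i))⟩

theorem exists_tendsto_pow_of_forall_tendsto_mulVec [Nonempty ι] (hP : P ∈ rowStochastic ℝ ι)
    (h : ∀ x : ι → ℝ, ∃ c, Tendsto (fun k => P ^ k *ᵥ x) atTop (nhds fun _ => c)) :
    ∃ y : ι → ℝ, (∀ i, 0 ≤ y i) ∧ (∑ i, y i) = 1 ∧
      Tendsto (fun k : ℕ => P ^ k) atTop (nhds (Matrix.of fun _ j => y j)) ∧
      ∀ x₀ : ι → ℝ, Tendsto (fun k : ℕ => (P ^ k) *ᵥ x₀) atTop (nhds fun _ => y ⬝ᵥ x₀) := by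
  choose c hc using h
  set y : ι → ℝ := fun j => c (Pi.single j 1)
  have hlim : Tendsto (fun k : ℕ => P ^ k) atTop (nhds (Matrix.of fun _ j => y j)) :=
    tendsto_pi_nhds.2 fun i => tendsto_pi_nhds.2 fun j => by
      simpa [mulVec_single_one] using tendsto_pi_nhds.1 (hc (Pi.single j 1)) i
  have hvec : ∀ x, Tendsto (fun k : ℕ => P ^ k *ᵥ x) atTop (nhds fun _ => y ⬝ᵥ x) := fun x =>
    (continuous_id.matrix_mulVec continuous_const).tendsto _ |>.comp hlim
  obtain ⟨i⟩ := ‹Nonempty ι›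
  refine ⟨y, fun j => ?_, ?_, hlim, hvec⟩
  · exact ge_of_tendsto' (tendsto_pi_nhds.1 (tendsto_pi_nhds.1 hlim i) j)
      fun k => (pow_mem hP k).1 i j
  · have hone : Tendsto (fun k : ℕ => P ^ k *ᵥ 1) atTop (nhds 1) := by
      simp only [fun k => (pow_mem hP k).2, tendsto_const_nhds]
    simpa [dotProduct_one] using congrFun (tendsto_nhds_unique (hvec 1) hone) i

end Matrix

/-- A row-stochastic matrix `P` with positive diagonal entries whose associated directed
graph (edge from `j` to `i` whenever `p_ij > 0`, `i ≠ j`) has a directed spanning tree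
is SIA: `P^k → 1·yᵀ` for some entrywise nonnegative `y` with `yᵀ1 = 1`.  Consequently,
for every `x₀` the iterates `P^k x₀` converge to the consensus vector `(yᵀx₀)·1`. -/
theorem stochastic_positive_diagonal_spanning_tree_is_SIA
    {n : ℕ} (P : Matrix (Fin n) (Fin n) ℝ)
    (hnonneg : ∀ i j, 0 ≤ P i j) (hrow : ∀ i, ∑ j, P i j = 1)
    (hdiag : ∀ i, 0 < P i i)
    (htree : ∃ r : Fin n, ∀ i : Fin n,
      Relation.ReflTransGen (fun x y => x ≠ y ∧ 0 < P y x) r i) :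
    ∃ y : Fin n → ℝ, (∀ i, 0 ≤ y i) ∧ (∑ i, y i) = 1 ∧
      Tendsto (fun k : ℕ => P ^ k) atTop (nhds (Matrix.of fun _ j => y j)) ∧
      ∀ x₀ : Fin n → ℝ,
        Tendsto (fun k : ℕ => (P ^ k) *ᵥ x₀) atTop (nhds fun _ => y ⬝ᵥ x₀) := by
  obtain ⟨r, hr⟩ := htree
  have : Nonempty (Fin n) := ⟨r⟩
  have hP : P ∈ rowStochastic ℝ (Fin n) := mem_rowStochastic_iff_sum.2 ⟨hnonneg, hrow⟩
  obtain ⟨K, hK⟩ := exists_pow_col_pos_of_reflTransGen hnonneg hdiag fun i =>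
    Relation.ReflTransGen.mono (fun _ _ h => h.2) _ _ (hr i)
  exact exists_tendsto_pow_of_forall_tendsto_mulVec hP (exists_tendsto_pow_mulVec_const hP hK)
end

section
/- Let {P_k}_{k≥0} ⊂ ℝ^{n×n} be a sequence of row-stochastic matrices and suppose there exist η > 0 and an integer B ≥ 0 such that: (i) every diagonal entry of every P_k is at least η; (ii) every nonzero entry of every P_k is at least η; and (iii) for every k, the directed graph with an edge from j to i (i ≠ j) whenever (P_m)_{ij} > 0 for some m ∈ {k, k+1, …, k+B} has a directed spanning tree. Then the left products Φ_k = P_k P_{k-1} ⋯ P_1 P_0 converge, as k → ∞, to a rank-one row-stochastic matrix 1·yᵀ for some entrywise nonnegative y ∈ ℝ^n with yᵀ1 = 1; in particular, for every x₀ the iterates x(k+1) = P_k x(k) reach consensus. -/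
open Matrix Finset Filter

/-- The left product `Φ_k = P_k · P_{k-1} ⋯ P_1 · P_0`. -/
def leftProd {n : ℕ} (P : ℕ → Matrix (Fin n) (Fin n) ℝ) :
    ℕ → Matrix (Fin n) (Fin n) ℝ
  | 0 => P 0
  | (k + 1) => P (k + 1) * leftProd P k

/-!
With positive diagonals, a positive entry of a product of the `P m` stays positive when more
factors are multiplied on either side, and an edge of the union graph of a window yields a
positive entry of the product over that window. By pigeonhole some vertex `c` is a root of `n` of
any `n²` consecutive windows, and each of these spreads the positive entries of column `c` along
an edge, so every product of `n²(B + 1)` consecutive factors has a column bounded below by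
`δ = η ^ (n²(B + 1))`. Such a row-stochastic matrix shrinks `max v - min v` by the factor `1 - δ`.
Along `Φ_k u` the maximum does not increase and the minimum does not decrease, so both converge,
to a common limit; the limit matrix `1·yᵀ` is row stochastic because this set is closed.
-/

open Topology

theorem Relation.ReflTransGen.exists_rel_of_not {α : Type*} {r : α → α → Prop} {p : α → Prop}
    {a b : α} (hab : Relation.ReflTransGen r a b) (ha : p a) (hb : ¬ p b) :
    ∃ x y, p x ∧ ¬ p y ∧ r x y := by
  induction hab with
  | refl => exact absurd ha hb
  | @tail c d _ hcd ih =>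
    by_cases hc : p c
    · exact ⟨c, d, hc, hb, hcd⟩
    · exact ih hc

theorem Finset.eq_univ_of_card_le_card_filter_add {ι : Type*} [Fintype ι]
    {S : ℕ → Finset ι} (hmono : ∀ T, S T ⊆ S (T + 1)) (p : ℕ → Prop) [DecidablePred p]
    (hgrow : ∀ T, p T → S T ≠ univ → S T ⊂ S (T + 1)) {T : ℕ}
    (hT : Fintype.card ι ≤ #{t ∈ range T | p t} + #(S 0)) : S T = univ := by
  suffices h : ∀ T, min (#{t ∈ range T | p t} + #(S 0)) (Fintype.card ι) ≤ #(S T) from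
    eq_univ_of_card _ (le_antisymm (card_le_univ _) ((min_eq_right hT).symm.trans_le (h T)))
  intro T
  induction T with
  | zero => simp
  | succ T ih =>
    have hle : #(S T) ≤ #(S (T + 1)) := card_le_card (hmono T)
    rw [range_add_one, filter_insert]
    by_cases hpT : p T
    · rw [if_pos hpT, card_insert_of_notMem (by simp)]
      by_cases hU : S T = univ
      · have : #(S (T + 1)) = Fintype.card ι := by
          rw [eq_univ_of_forall fun i => hmono T (hU ▸ mem_univ i), card_univ]
        omega
      · have hlt := card_lt_card (hgrow T hpT hU)
        omega
    · rw [if_neg hpT]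
      omega

namespace Matrix

variable {ι : Type*} [Fintype ι]

theorem isClosed_rowStochastic [DecidableEq ι] :
    IsClosed (rowStochastic ℝ ι : Set (Matrix ι ι ℝ)) := by
  refine .inter ?_ (isClosed_eq (continuous_id.matrix_mulVec continuous_const) continuous_const)
  show IsClosed {M : Matrix ι ι ℝ | ∀ i j, 0 ≤ M i j}
  simp only [Set.ofPred_forall]
  exact isClosed_iInter fun i => isClosed_iInter fun j =>
    isClosed_le continuous_const (continuous_apply_apply i j)

theorem apply_mul_apply_le_mul_apply {A B : Matrix ι ι ℝ} (hA : ∀ i j, 0 ≤ A i j)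
    (hB : ∀ i j, 0 ≤ B i j) (i l j : ι) : A i l * B l j ≤ (A * B) i j :=
  single_le_sum (f := fun x => A i x * B x j) (fun x _ => mul_nonneg (hA i x) (hB x j))
    (mem_univ l)

theorem mul_apply_pos {A B : Matrix ι ι ℝ} (hA : ∀ i j, 0 ≤ A i j) (hB : ∀ i j, 0 ≤ B i j)
    {i l j : ι} (hil : 0 < A i l) (hlj : 0 < B l j) : 0 < (A * B) i j :=
  (mul_pos hil hlj).trans_le (apply_mul_apply_le_mul_apply hA hB i l j)

section Oscillation

variable [DecidableEq ι] {A : Matrix ι ι ℝ}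

theorem iInf_le_mulVec_apply (hA : A ∈ rowStochastic ℝ ι) (v : ι → ℝ) (i : ι) :
    ⨅ j, v j ≤ (A *ᵥ v) i := by
  calc ⨅ j, v j = ∑ l, A i l * ⨅ j, v j := by
        rw [← sum_mul, sum_row_of_mem_rowStochastic hA, one_mul]
    _ ≤ ∑ l, A i l * v l := sum_le_sum fun l _ => mul_le_mul_of_nonneg_left
        (ciInf_le (Set.finite_range v).bddBelow l) (nonneg_of_mem_rowStochastic hA)

theorem mulVec_apply_le_iSup (hA : A ∈ rowStochastic ℝ ι) (v : ι → ℝ) (i : ι) :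
    (A *ᵥ v) i ≤ ⨆ j, v j := by
  calc ∑ l, A i l * v l ≤ ∑ l, A i l * ⨆ j, v j := sum_le_sum fun l _ =>
        mul_le_mul_of_nonneg_left (le_ciSup (Set.finite_range v).bddAbove l)
          (nonneg_of_mem_rowStochastic hA)
    _ = ⨆ j, v j := by rw [← sum_mul, sum_row_of_mem_rowStochastic hA, one_mul]

theorem iSup_sub_iInf_mulVec_le [Nonempty ι] (hA : A ∈ rowStochastic ℝ ι) {δ : ℝ} {c : ι}
    (hc : ∀ i, δ ≤ A i c) (v : ι → ℝ) :
    (⨆ i, (A *ᵥ v) i) - ⨅ i, (A *ᵥ v) i ≤ (1 - δ) * ((⨆ i, v i) - ⨅ i, v i) := by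
  set M := ⨆ i, v i
  set m := ⨅ i, v i
  have hvM : ∀ l, v l ≤ M := le_ciSup (Set.finite_range v).bddAbove
  have hmv : ∀ l, m ≤ v l := ciInf_le (Set.finite_range v).bddBelow
  have hA0 : ∀ i l, 0 ≤ A i l := fun i l => nonneg_of_mem_rowStochastic hA
  have hsum : ∀ i (w : ι → ℝ), (A *ᵥ w) i = ∑ l, A i l * w l := fun _ _ => rfl
  -- `(A *ᵥ v) i = M - ∑ l, A i l * (M - v l)`, and the term `l = c` alone is `≥ δ * (M - v c)`.
  have hupper : ∀ i, (A *ᵥ v) i ≤ M - δ * (M - v c) := by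
    intro i
    have hgap : A i c * (M - v c) ≤ ∑ l, A i l * (M - v l) :=
      single_le_sum (f := fun l => A i l * (M - v l))
        (fun l _ => mul_nonneg (hA0 i l) (sub_nonneg.2 (hvM l))) (mem_univ c)
    have : (A *ᵥ v) i = M - ∑ l, A i l * (M - v l) := by
      simp only [hsum, mul_sub, sum_sub_distrib, ← sum_mul, sum_row_of_mem_rowStochastic hA,
        one_mul, sub_sub_cancel]
    nlinarith [mul_le_mul_of_nonneg_right (hc i) (sub_nonneg.2 (hvM c))]
  have hlower : ∀ i, m + δ * (v c - m) ≤ (A *ᵥ v) i := by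
    intro i
    have hgap : A i c * (v c - m) ≤ ∑ l, A i l * (v l - m) :=
      single_le_sum (f := fun l => A i l * (v l - m))
        (fun l _ => mul_nonneg (hA0 i l) (sub_nonneg.2 (hmv l))) (mem_univ c)
    have : (A *ᵥ v) i = m + ∑ l, A i l * (v l - m) := by
      simp only [hsum, mul_sub, sum_sub_distrib, ← sum_mul, sum_row_of_mem_rowStochastic hA,
        one_mul, add_sub_cancel]
    nlinarith [mul_le_mul_of_nonneg_right (hc i) (sub_nonneg.2 (hmv c))]
  have h1 := ciSup_le hupper
  have h2 := le_ciInf hlower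
  nlinarith

end Oscillation

end Matrix

section WindowProduct

variable {ι : Type*} [Fintype ι] [DecidableEq ι] {P : ℕ → Matrix ι ι ℝ}

/-- `windowProd P k m = P (k + m - 1) * ⋯ * P (k + 1) * P k`. -/
def windowProd (P : ℕ → Matrix ι ι ℝ) (k : ℕ) : ℕ → Matrix ι ι ℝ
  | 0 => 1
  | m + 1 => P (k + m) * windowProd P k m

theorem windowProd_succ (P : ℕ → Matrix ι ι ℝ) (k m : ℕ) :
    windowProd P k (m + 1) = P (k + m) * windowProd P k m := rfl

theorem windowProd_add (P : ℕ → Matrix ι ι ℝ) (k a b : ℕ) :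
    windowProd P k (a + b) = windowProd P (k + a) b * windowProd P k a := by
  induction b with
  | zero => simp [windowProd]
  | succ b ih =>
    rw [← add_assoc, windowProd_succ, ih, windowProd_succ, Matrix.mul_assoc, add_assoc]

theorem leftProd_eq_windowProd {n : ℕ} (P : ℕ → Matrix (Fin n) (Fin n) ℝ) (k : ℕ) :
    leftProd P k = windowProd P 0 (k + 1) := by
  induction k with
  | zero => simp [leftProd, windowProd]
  | succ k ih => rw [leftProd, ih, windowProd_succ _ _ (k + 1), zero_add]

theorem windowProd_mem_rowStochastic (hP : ∀ k, P k ∈ rowStochastic ℝ ι) (k m : ℕ) :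
    windowProd P k m ∈ rowStochastic ℝ ι := by
  induction m with
  | zero => exact Submonoid.one_mem _
  | succ m ih => exact Submonoid.mul_mem _ (hP _) ih

section Positivity

variable (hnonneg : ∀ k i j, 0 ≤ P k i j)
include hnonneg

theorem windowProd_nonneg (k m : ℕ) (i j : ι) : 0 ≤ windowProd P k m i j := by
  induction m generalizing i j with
  | zero => by_cases h : i = j <;> simp [windowProd, one_apply, h]
  | succ m ih => exact sum_nonneg fun l _ => mul_nonneg (hnonneg _ _ _) (ih l j)

theorem windowProd_add_apply_pos {k a b : ℕ} {i l j : ι} (hil : 0 < windowProd P (k + a) b i l)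
    (hlj : 0 < windowProd P k a l j) : 0 < windowProd P k (a + b) i j := by
  rw [windowProd_add]
  exact mul_apply_pos (windowProd_nonneg hnonneg _ _) (windowProd_nonneg hnonneg _ _) hil hlj

theorem pow_le_windowProd_apply {η : ℝ} (hη : 0 ≤ η)
    (hentries : ∀ k i j, P k i j ≠ 0 → η ≤ P k i j)
    {k m : ℕ} {i j : ι} (h : windowProd P k m i j ≠ 0) : η ^ m ≤ windowProd P k m i j := by
  induction m generalizing i with
  | zero => by_cases hij : i = j <;> simp_all [windowProd, one_apply]
  | succ m ih =>
    obtain ⟨l, -, hl⟩ := exists_ne_zero_of_sum_ne_zero h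
    have hPl : P (k + m) i l ≠ 0 := left_ne_zero_of_mul hl
    calc η ^ (m + 1) = η * η ^ m := pow_succ' η m
      _ ≤ P (k + m) i l * windowProd P k m l j :=
        mul_le_mul (hentries _ _ _ hPl) (ih (right_ne_zero_of_mul hl)) (pow_nonneg hη m)
          (hnonneg _ _ _)
      _ ≤ _ := apply_mul_apply_le_mul_apply (hnonneg _) (windowProd_nonneg hnonneg k m) i l j

variable (hdiag : ∀ k i, 0 < P k i i)
include hdiag

theorem windowProd_apply_self_pos (k m : ℕ) (i : ι) : 0 < windowProd P k m i i := by
  induction m with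
  | zero => simp [windowProd]
  | succ m ih => exact mul_apply_pos (hnonneg _) (windowProd_nonneg hnonneg k m) (hdiag _ i) ih

theorem windowProd_add_apply_pos_of_pos {k a : ℕ} (b : ℕ) {i j : ι}
    (h : 0 < windowProd P k a i j) : 0 < windowProd P k (a + b) i j :=
  windowProd_add_apply_pos hnonneg (windowProd_apply_self_pos hnonneg hdiag _ _ i) h

theorem windowProd_apply_pos_of_apply_pos {k m l : ℕ} {i j : ι} (hkm : k ≤ m) (hml : m < k + l)
    (h : 0 < P m i j) : 0 < windowProd P k l i j := by
  obtain ⟨a, rfl⟩ := Nat.exists_eq_add_of_le hkm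
  obtain ⟨b, rfl⟩ := Nat.exists_eq_add_of_lt (Nat.add_lt_add_iff_left.1 hml)
  rw [add_right_comm]
  refine windowProd_add_apply_pos_of_pos hnonneg hdiag b ?_
  exact mul_apply_pos (hnonneg _) (windowProd_nonneg hnonneg k a) h
    (windowProd_apply_self_pos hnonneg hdiag k a j)

/-- The union graph of `P k, …, P (k + B)`: an edge `x → y` whenever some `P m` in the window
has `(P m) y x > 0`. -/
def unionGraph (P : ℕ → Matrix ι ι ℝ) (k B : ℕ) (x y : ι) : Prop :=
  x ≠ y ∧ ∃ m, k ≤ m ∧ m ≤ k + B ∧ 0 < P m y x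

theorem exists_windowProd_apply_pos_of_root {B k a : ℕ} {c : ι}
    (hroot : ∀ i, Relation.ReflTransGen (unionGraph P (k + a) B) c i) {i₀ : ι}
    (hi₀ : ¬ 0 < windowProd P k a i₀ c) :
    ∃ y, ¬ 0 < windowProd P k a y c ∧ 0 < windowProd P k (a + (B + 1)) y c := by
  obtain ⟨x, y, hx, hy, -, m, hkm, hmB, hyx⟩ := (hroot i₀).exists_rel_of_not
    (p := fun i => 0 < windowProd P k a i c) (windowProd_apply_self_pos hnonneg hdiag k a c) hi₀
  refine ⟨y, hy, windowProd_add_apply_pos hnonneg ?_ hx⟩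
  exact windowProd_apply_pos_of_apply_pos hnonneg hdiag hkm (by omega) hyx

theorem exists_forall_windowProd_apply_pos {B : ℕ}
    (htree : ∀ k, ∃ r, ∀ i, Relation.ReflTransGen (unionGraph P k B) r i) (k : ℕ) :
    ∃ c, ∀ i, 0 < windowProd P k (Fintype.card ι * Fintype.card ι * (B + 1)) i c := by
  set n := Fintype.card ι
  choose ρ hρ using fun T => htree (k + T * (B + 1))
  obtain ⟨c, -, hc⟩ := exists_le_card_fiber_of_mul_le_card_of_maps_to
    (s := range (n * n)) (f := ρ) (n := n) (fun T _ => mem_univ (ρ T))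
    ⟨ρ 0, mem_univ _⟩ (by simp [n])
  let S : ℕ → Finset ι := fun T => {i | 0 < windowProd P k (T * (B + 1)) i c}
  have hmono : ∀ T, S T ⊆ S (T + 1) := fun T i hi => by
    simpa [S, add_mul] using
      windowProd_add_apply_pos_of_pos hnonneg hdiag (B + 1) (mem_filter.1 hi).2
  have hgrow : ∀ T, ρ T = c → S T ≠ univ → S T ⊂ S (T + 1) := by
    intro T hT hS
    obtain ⟨i₀, -, hi₀⟩ := exists_of_ssubset (ssubset_univ_iff.2 hS)
    obtain ⟨y, hy, hy'⟩ := exists_windowProd_apply_pos_of_root hnonneg hdiag (hT ▸ hρ T)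
      (by simpa [S] using hi₀)
    have hyS : y ∈ S (T + 1) := by simpa [S, add_mul] using hy'
    refine ssubset_of_subset_of_ne (hmono T) fun h => hy ?_
    exact (mem_filter.1 (h ▸ hyS : y ∈ S T)).2
  have hc0 : c ∈ S 0 := by simpa [S] using windowProd_apply_self_pos hnonneg hdiag k 0 c
  have hfull := eq_univ_of_card_le_card_filter_add hmono (fun T => ρ T = c) hgrow
    (T := n * n) (by have := card_pos.2 ⟨c, hc0⟩; omega)
  refine ⟨c, fun i => ?_⟩
  have hi : i ∈ S (n * n) := hfull ▸ mem_univ i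
  exact (mem_filter.1 hi).2

end Positivity

end WindowProduct

section Convergence

variable {ι : Type*} [Fintype ι] [DecidableEq ι] [Nonempty ι] {P : ℕ → Matrix ι ι ℝ}

theorem exists_tendsto_windowProd_mulVec (hP : ∀ k, P k ∈ rowStochastic ℝ ι) {L : ℕ} {δ : ℝ}
    (hδ : 0 < δ) (hcol : ∀ k, ∃ c, ∀ i, δ ≤ windowProd P k L i c) (u : ι → ℝ) :
    ∃ ℓ, ∀ i, Tendsto (fun m => (windowProd P 0 m *ᵥ u) i) atTop (𝓝 ℓ) := by
  set v : ℕ → ι → ℝ := fun m => windowProd P 0 m *ᵥ u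
  set M : ℕ → ℝ := fun m => ⨆ i, v m i
  set μ : ℕ → ℝ := fun m => ⨅ i, v m i
  have hstep : ∀ m s, v (m + s) = windowProd P m s *ᵥ v m := fun m s => by
    simp only [v, windowProd_add, zero_add, mulVec_mulVec]
  have hle_M : ∀ m i, v m i ≤ M m := fun m => le_ciSup (Set.finite_range _).bddAbove
  have hμ_le : ∀ m i, μ m ≤ v m i := fun m => ciInf_le (Set.finite_range _).bddBelow
  have hM : Antitone M := antitone_nat_of_succ_le fun m => ciSup_le fun i => by
    simpa only [hstep] using mulVec_apply_le_iSup (windowProd_mem_rowStochastic hP m 1) (v m) i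
  have hμ : Monotone μ := monotone_nat_of_le_succ fun m => le_ciInf fun i => by
    simpa only [hstep] using iInf_le_mulVec_apply (windowProd_mem_rowStochastic hP m 1) (v m) i
  have hμM : ∀ m, μ m ≤ M m := fun m =>
    (hμ_le m (Classical.arbitrary ι)).trans (hle_M m (Classical.arbitrary ι))
  have hMlim : Tendsto M atTop (𝓝 (⨅ m, M m)) := tendsto_atTop_ciInf hM
    ⟨μ 0, by rintro _ ⟨m, rfl⟩; exact (hμ (Nat.zero_le m)).trans (hμM m)⟩
  have hμlim : Tendsto μ atTop (𝓝 (⨆ m, μ m)) := tendsto_atTop_ciSup hμ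
    ⟨M 0, by rintro _ ⟨m, rfl⟩; exact (hμM m).trans (hM (Nat.zero_le m))⟩
  have hcontr : ∀ m, M (m + L) - μ (m + L) ≤ (1 - δ) * (M m - μ m) := fun m => by
    obtain ⟨c, hc⟩ := hcol m
    simpa only [M, μ, hstep m L] using
      iSup_sub_iInf_mulVec_le (windowProd_mem_rowStochastic hP m L) hc (v m)
  -- the limit oscillation `d ≥ 0` satisfies `d ≤ (1 - δ) * d`
  have hlim_eq : ⨅ m, M m = ⨆ m, μ m := by
    have hosc := hMlim.sub hμlim
    have := le_of_tendsto_of_tendsto' (hosc.comp (tendsto_add_atTop_nat L))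
      (hosc.const_mul (1 - δ)) hcontr
    have := le_of_tendsto_of_tendsto' hμlim hMlim hμM
    nlinarith
  exact ⟨⨆ m, μ m, fun i => tendsto_of_tendsto_of_tendsto_of_le_of_le hμlim (hlim_eq ▸ hMlim)
    (fun m => hμ_le m i) (fun m => hle_M m i)⟩

theorem exists_tendsto_windowProd (hP : ∀ k, P k ∈ rowStochastic ℝ ι) {L : ℕ} {δ : ℝ}
    (hδ : 0 < δ) (hcol : ∀ k, ∃ c, ∀ i, δ ≤ windowProd P k L i c) :
    ∃ y : ι → ℝ, Tendsto (windowProd P 0) atTop (𝓝 (of fun _ j => y j)) := by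
  choose y hy using fun j => exists_tendsto_windowProd_mulVec hP hδ hcol (Pi.single j 1)
  refine ⟨y, tendsto_pi_nhds.2 fun i => tendsto_pi_nhds.2 fun j => ?_⟩
  simpa [mulVec_single] using hy j i

end Convergence

/-- Consensus for left products of row-stochastic matrices: if all diagonal entries and
all nonzero entries of every `P_k` are bounded below by some `η > 0`, and for every `k`
the union directed graph over the window `{k, …, k+B}` (edge from `j` to `i`, `i ≠ j`,
whenever `(P_m)_{ij} > 0` for some `m` in the window) has a directed spanning tree, then
the left products `Φ_k = P_k ⋯ P_0` converge to a rank-one row-stochastic matrix `1·yᵀ`;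
in particular the iterates `x(k+1) = P_k x(k)` reach consensus for every `x₀`. -/
theorem left_products_of_stochastic_matrices_consensus
    {n : ℕ} (P : ℕ → Matrix (Fin n) (Fin n) ℝ)
    (hnonneg : ∀ k i j, 0 ≤ P k i j) (hrow : ∀ k i, ∑ j, P k i j = 1)
    (η : ℝ) (hη : 0 < η) (B : ℕ)
    (hdiag : ∀ k i, η ≤ P k i i)
    (hentries : ∀ k i j, P k i j ≠ 0 → η ≤ P k i j)
    (htree : ∀ k : ℕ, ∃ r : Fin n, ∀ i : Fin n,
      Relation.ReflTransGen
        (fun x y => x ≠ y ∧ ∃ m : ℕ, k ≤ m ∧ m ≤ k + B ∧ 0 < P m y x) r i) :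
    ∃ y : Fin n → ℝ, (∀ i, 0 ≤ y i) ∧ (∑ i, y i) = 1 ∧
      Tendsto (fun k : ℕ => leftProd P k) atTop (nhds (Matrix.of fun _ j => y j)) ∧
      ∀ x₀ : Fin n → ℝ, ∀ i j : Fin n,
        Tendsto (fun k : ℕ => (leftProd P k *ᵥ x₀) i - (leftProd P k *ᵥ x₀) j)
          atTop (nhds 0) := by
  obtain ⟨r, -⟩ := htree 0
  have : Nonempty (Fin n) := ⟨r⟩
  have hP : ∀ k, P k ∈ rowStochastic ℝ (Fin n) := fun k =>
    mem_rowStochastic_iff_sum.2 ⟨hnonneg k, hrow k⟩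
  have hcol : ∀ k, ∃ c, ∀ i, η ^ (n * n * (B + 1)) ≤ windowProd P k (n * n * (B + 1)) i c := by
    intro k
    obtain ⟨c, hc⟩ := exists_forall_windowProd_apply_pos hnonneg
      (fun k i => hη.trans_le (hdiag k i)) htree k
    exact ⟨c, fun i => pow_le_windowProd_apply hnonneg hη.le hentries (by simpa using (hc i).ne')⟩
  obtain ⟨y, hy⟩ := exists_tendsto_windowProd hP (pow_pos hη _) hcol
  have hlim : Tendsto (leftProd P) atTop (𝓝 (of fun _ j => y j)) := by
    rw [funext (leftProd_eq_windowProd P)]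
    exact hy.comp (tendsto_add_atTop_nat 1)
  obtain ⟨hy0, hy1⟩ := mem_rowStochastic_iff_sum.1 <| isClosed_rowStochastic.mem_of_tendsto hlim
    (.of_forall fun k => leftProd_eq_windowProd P k ▸ windowProd_mem_rowStochastic hP 0 _)
  refine ⟨y, hy0 r, hy1 r, hlim, fun x₀ i j => ?_⟩
  have hv : Tendsto (fun k => leftProd P k *ᵥ x₀) atTop (𝓝 (of (fun _ j => y j) *ᵥ x₀)) :=
    ((continuous_id.matrix_mulVec continuous_const).tendsto _).comp hlim
  have hij : (of (fun _ j => y j) *ᵥ x₀) i = (of (fun _ j => y j) *ᵥ x₀) j := rfl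
  simpa only [hij, sub_self] using (tendsto_pi_nhds.1 hv i).sub (tendsto_pi_nhds.1 hv j)
end
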